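/- arXiv:2112.08420 — 3 statements merged into one kernel-verified Lean document; each statement's English description precedes it below -/
import Mathlib

section
/- For every p in (0,1] there exists a constant C > 0 such that for all distinct real x, y with |x - y| \le 1/2, one has |S_p(x) - S_p(y)| \le C |x - y|^p \log_2(1/|x - y|). In particular one may take C = (1/p)\log_2(p \ln 2/(2^p - 1)) + 2^p/(p \ln 2) + 1. -/
/-!
Each summand `(T0 (2 ^ n x) / 2 ^ n) ^ p` moves by at most `|x - y| ^ p`, since `T0` is
1-Lipschitz and `t ↦ t ^ p` is `p`-Hölder for `p ≤ 1`; it is also at most `2 ^ (-p (n + 1))`.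
Using the first bound for the first `N` summands and the geometric tail for the rest, with
`N ≈ log₂ (1 / |x - y|)` shifted by the constant making the tail at most
`|x - y| ^ p / (p log 2)`, gives `N |x - y| ^ p + |x - y| ^ p / (p log 2)`.
-/

open Real

noncomputable def T0 (x : ℝ) : ℝ := |x - round x|

noncomputable def S (p x : ℝ) : ℝ := ∑' n : ℕ, (T0 (2 ^ n * x) / 2 ^ n) ^ p

lemma Real.abs_rpow_sub_rpow_le {p a b : ℝ} (ha : 0 ≤ a) (hb : 0 ≤ b) (hp0 : 0 ≤ p)
    (hp1 : p ≤ 1) : |a ^ p - b ^ p| ≤ |a - b| ^ p := by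
  wlog hba : b ≤ a generalizing a b
  · rw [abs_sub_comm, abs_sub_comm a b]
    exact this hb ha (le_of_not_ge hba)
  have hsub : a ^ p ≤ (a - b) ^ p + b ^ p := by
    simpa using rpow_add_le_add_rpow (sub_nonneg.2 hba) hb hp0 hp1
  rw [abs_of_nonneg (sub_nonneg.2 (rpow_le_rpow hb hba hp0)), abs_of_nonneg (sub_nonneg.2 hba)]
  linarith

lemma tsum_le_mul_add_geometric {d : ℕ → ℝ} {a c r : ℝ} (hd : Summable d) (hr0 : 0 ≤ r)
    (hr1 : r < 1) (hda : ∀ n, d n ≤ a) (hdr : ∀ n, d n ≤ c * r ^ n) (N : ℕ) :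
    ∑' n, d n ≤ N * a + c * r ^ N / (1 - r) := by
  have hgeom := summable_geometric_of_lt_one hr0 hr1
  have head : ∑ n ∈ Finset.range N, d n ≤ N * a := by
    simpa using Finset.sum_le_card_nsmul (Finset.range N) d a fun n _ => hda n
  have tail : ∑' n, d (n + N) ≤ ∑' n, c * r ^ N * r ^ n :=
    ((summable_nat_add_iff N).2 hd).tsum_le_tsum (fun n => (hdr _).trans_eq (by ring))
      (hgeom.mul_left _)
  rw [tsum_mul_left, tsum_geometric_of_lt_one hr0 hr1] at tail
  rw [← hd.sum_add_tsum_nat_add N, div_eq_mul_inv]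
  exact add_le_add head tail

lemma T0_nonneg (x : ℝ) : 0 ≤ T0 x := abs_nonneg _

lemma T0_le_half (x : ℝ) : T0 x ≤ 1 / 2 := abs_sub_round x

lemma T0_le_T0_add_abs_sub (u v : ℝ) : T0 u ≤ T0 v + |u - v| :=
  calc T0 u ≤ |u - round v| := by exact_mod_cast round_le u (round v)
    _ ≤ |u - v| + |v - round v| := abs_sub_le u v _
    _ = T0 v + |u - v| := add_comm _ _

lemma abs_T0_sub_T0_le (u v : ℝ) : |T0 u - T0 v| ≤ |u - v| := by
  rw [abs_sub_le_iff]
  constructor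
  · linarith [T0_le_T0_add_abs_sub u v]
  · linarith [T0_le_T0_add_abs_sub v u, abs_sub_comm u v]

noncomputable def sTerm (p : ℝ) (n : ℕ) (x : ℝ) : ℝ := (T0 (2 ^ n * x) / 2 ^ n) ^ p

lemma S_eq_tsum_sTerm (p x : ℝ) : S p x = ∑' n, sTerm p n x := rfl

section sTerm

variable {p : ℝ}

lemma sTerm_nonneg (n : ℕ) (x : ℝ) : 0 ≤ sTerm p n x :=
  rpow_nonneg (div_nonneg (T0_nonneg _) (by positivity)) p

lemma sTerm_le (hp : 0 ≤ p) (n : ℕ) (x : ℝ) :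
    sTerm p n x ≤ ((2 : ℝ) ^ p)⁻¹ ^ (n + 1) := by
  have hbase : T0 (2 ^ n * x) / 2 ^ n ≤ (2⁻¹) ^ (n + 1) := by
    have half : (2⁻¹ : ℝ) ^ (n + 1) * 2 ^ n = 1 / 2 := by rw [pow_succ, inv_pow]; field_simp
    rw [div_le_iff₀ (by positivity), half]
    exact T0_le_half _
  calc sTerm p n x ≤ ((2⁻¹ : ℝ) ^ (n + 1)) ^ p :=
        rpow_le_rpow (div_nonneg (T0_nonneg _) (by positivity)) hbase hp
    _ = ((2 : ℝ) ^ p)⁻¹ ^ (n + 1) := by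
        rw [← rpow_natCast, ← rpow_mul (by norm_num), mul_comm, rpow_mul (by norm_num),
          rpow_natCast, inv_rpow (by norm_num)]

lemma summable_sTerm (hp : 0 < p) (x : ℝ) : Summable (sTerm p · x) := by
  refine .of_nonneg_of_le (sTerm_nonneg · x) (sTerm_le hp.le · x) ?_
  exact (summable_nat_add_iff 1).2 (summable_geometric_of_lt_one (by positivity)
    (inv_lt_one_of_one_lt₀ (one_lt_rpow one_lt_two hp)))

lemma abs_sTerm_sub_sTerm_le (hp0 : 0 ≤ p) (hp1 : p ≤ 1) (n : ℕ) (x y : ℝ) :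
    |sTerm p n x - sTerm p n y| ≤ |x - y| ^ p := by
  have h2n : (0 : ℝ) < 2 ^ n := by positivity
  have hlip : |T0 (2 ^ n * x) / 2 ^ n - T0 (2 ^ n * y) / 2 ^ n| ≤ |x - y| := by
    rw [div_sub_div_same, abs_div, abs_of_pos h2n, div_le_iff₀ h2n]
    calc |T0 (2 ^ n * x) - T0 (2 ^ n * y)| ≤ |2 ^ n * x - 2 ^ n * y| := abs_T0_sub_T0_le _ _
      _ = |x - y| * 2 ^ n := by rw [← mul_sub, abs_mul, abs_of_pos h2n, mul_comm]
  exact (abs_rpow_sub_rpow_le (div_nonneg (T0_nonneg _) h2n.le)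
    (div_nonneg (T0_nonneg _) h2n.le) hp0 hp1).trans (rpow_le_rpow (abs_nonneg _) hlip hp0)

lemma abs_sTerm_sub_sTerm_le_geometric (hp : 0 ≤ p) (n : ℕ) (x y : ℝ) :
    |sTerm p n x - sTerm p n y| ≤ ((2 : ℝ) ^ p)⁻¹ * ((2 : ℝ) ^ p)⁻¹ ^ n := by
  rw [← pow_succ']
  exact abs_sub_le_of_nonneg_of_le (sTerm_nonneg n x) (sTerm_le hp n x) (sTerm_nonneg n y)
    (sTerm_le hp n y)

end sTerm

lemma abs_S_sub_S_le {p : ℝ} (hp0 : 0 < p) (hp1 : p ≤ 1) (x y : ℝ) (N : ℕ) :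
    |S p x - S p y| ≤ N * |x - y| ^ p + ((2 : ℝ) ^ p)⁻¹ ^ N / (2 ^ p - 1) := by
  have hE : 1 < (2 : ℝ) ^ p := one_lt_rpow one_lt_two hp0
  have hr1 : ((2 : ℝ) ^ p)⁻¹ < 1 := inv_lt_one_of_one_lt₀ hE
  have hd : Summable fun n => |sTerm p n x - sTerm p n y| :=
    .of_nonneg_of_le (fun _ => abs_nonneg _) (abs_sTerm_sub_sTerm_le_geometric hp0.le · x y)
      ((summable_geometric_of_lt_one (by positivity) hr1).mul_left _)
  have htail : ((2 : ℝ) ^ p)⁻¹ * ((2 : ℝ) ^ p)⁻¹ ^ N / (1 - ((2 : ℝ) ^ p)⁻¹)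
      = ((2 : ℝ) ^ p)⁻¹ ^ N / (2 ^ p - 1) := by
    field_simp [(sub_pos.2 hE).ne']
  calc |S p x - S p y| = |∑' n, (sTerm p n x - sTerm p n y)| := by
        rw [S_eq_tsum_sTerm, S_eq_tsum_sTerm,
          (summable_sTerm hp0 x).tsum_sub (summable_sTerm hp0 y)]
    _ ≤ ∑' n, |sTerm p n x - sTerm p n y| := by
        simpa only [Real.norm_eq_abs] using
          norm_tsum_le_tsum_norm (f := fun n => sTerm p n x - sTerm p n y) hd
    _ ≤ N * |x - y| ^ p + ((2 : ℝ) ^ p)⁻¹ ^ N / (2 ^ p - 1) := by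
        rw [← htail]
        exact tsum_le_mul_add_geometric hd (by positivity) hr1
          (abs_sTerm_sub_sTerm_le hp0.le hp1 · x y)
          (abs_sTerm_sub_sTerm_le_geometric hp0.le · x y) N

lemma one_add_inv_le_two_rpow_div {p : ℝ} (hp : 0 < p) :
    1 + 1 / (p * log 2) ≤ 2 ^ p / (p * log 2) := by
  have ht : 0 < p * log 2 := mul_pos hp (log_pos one_lt_two)
  have hexp : p * log 2 + 1 ≤ 2 ^ p := by
    rw [rpow_def_of_pos two_pos, mul_comm]
    exact add_one_le_exp _
  rw [le_div_iff₀ ht, add_mul, one_div_mul_cancel ht.ne']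
  linarith

lemma neg_one_le_inv_mul_logb {p : ℝ} (hp : 0 < p) :
    -1 ≤ 1 / p * logb 2 (p * log 2 / (2 ^ p - 1)) := by
  have ht : 0 < p * log 2 := mul_pos hp (log_pos one_lt_two)
  have hE : 0 < (2 : ℝ) ^ p - 1 := sub_pos.2 (one_lt_rpow one_lt_two hp)
  -- `2 ^ (-p) = exp (-p log 2) ≥ 1 - p log 2` rearranges to `2 ^ (-p) ≤ p log 2 / (2 ^ p - 1)`
  have hexp : 1 - p * log 2 ≤ (2 : ℝ) ^ (-p) := by
    rw [rpow_def_of_pos two_pos]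
    linarith [add_one_le_exp (log 2 * -p)]
  have hratio : (2 : ℝ) ^ (-p) ≤ p * log 2 / (2 ^ p - 1) := by
    rw [le_div_iff₀ hE, mul_sub, ← rpow_add two_pos, neg_add_cancel, rpow_zero]
    have : 0 < (2 : ℝ) ^ (-p) := by positivity
    nlinarith [rpow_pos_of_pos two_pos p]
  have hlog : -p ≤ logb 2 (p * log 2 / (2 ^ p - 1)) :=
    (le_logb_iff_rpow_le one_lt_two (div_pos ht hE)).2 hratio
  rw [one_div, le_inv_mul_iff₀ hp]
  linarith

lemma inv_two_rpow_pow_div_le {p h : ℝ} (hp : 0 < p) (hh : 0 < h) {N : ℕ}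
    (hN : logb 2 (1 / h) + 1 / p * logb 2 (p * log 2 / (2 ^ p - 1)) ≤ N) :
    ((2 : ℝ) ^ p)⁻¹ ^ N / (2 ^ p - 1) ≤ h ^ p / (p * log 2) := by
  have ht : 0 < p * log 2 := mul_pos hp (log_pos one_lt_two)
  have hE : 0 < (2 : ℝ) ^ p - 1 := sub_pos.2 (one_lt_rpow one_lt_two hp)
  have key : p * log 2 / (2 ^ p - 1) ≤ h ^ p * ((2 : ℝ) ^ p) ^ N := by
    rw [← logb_le_logb one_lt_two (div_pos ht hE) (by positivity),
      logb_mul (by positivity) (by positivity), logb_rpow_eq_mul_logb_of_pos hh, logb_pow,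
      logb_rpow two_pos (by norm_num)]
    rw [one_div, logb_inv] at hN
    have := mul_le_mul_of_nonneg_left hN hp.le
    field_simp at this
    linarith
  rw [inv_pow, div_le_div_iff₀ hE ht]
  rw [div_le_iff₀ hE] at key
  have hEN : 0 < ((2 : ℝ) ^ p) ^ N := by positivity
  field_simp
  nlinarith

theorem stmt_9 (p : ℝ) (hp0 : 0 < p) (hp1 : p ≤ 1) :
    ∃ C : ℝ, 0 < C ∧
      C = 1 / p * Real.logb 2 (p * Real.log 2 / (2 ^ p - 1)) + 2 ^ p / (p * Real.log 2) + 1 ∧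
      ∀ x y : ℝ, x ≠ y → |x - y| ≤ 1 / 2 →
        |S p x - S p y| ≤ C * |x - y| ^ p * Real.logb 2 (1 / |x - y|) := by
  have hA := neg_one_le_inv_mul_logb hp0
  have hE := one_add_inv_le_two_rpow_div hp0
  have ht : 0 < 1 / (p * log 2) := by have := log_pos one_lt_two; positivity
  set A := 1 / p * logb 2 (p * log 2 / (2 ^ p - 1))
  refine ⟨_, by linarith, rfl, fun x y hxy hxy_half => ?_⟩
  set h := |x - y|
  have hh : 0 < h := abs_pos.2 (sub_ne_zero.2 hxy)
  set L := logb 2 (1 / h)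
  have hL : 1 ≤ L := by
    rw [le_logb_iff_rpow_le one_lt_two (by positivity), rpow_one, le_div_iff₀ hh]
    linarith
  set N := ⌈L + A⌉₊
  have hN_lt : (N : ℝ) < L + A + 1 := Nat.ceil_lt_add_one (by linarith)
  calc |S p x - S p y| ≤ N * h ^ p + ((2 : ℝ) ^ p)⁻¹ ^ N / (2 ^ p - 1) :=
        abs_S_sub_S_le hp0 hp1 x y N
    _ ≤ N * h ^ p + h ^ p / (p * log 2) :=
        add_le_add_right (inv_two_rpow_pow_div_le hp0 hh (Nat.le_ceil _)) _
    _ = (N + 1 / (p * log 2)) * h ^ p := by ring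
    _ ≤ (A + 2 ^ p / (p * log 2) + 1) * L * h ^ p := by
        gcongr
        nlinarith
    _ = _ := by ring
end

section
/- For every p > 0, S_p(1/5) = 2 \cdot 4^p/(20^p - 5^p) and S_p(2/5) = (8^p + 2^p)/(20^p - 5^p). -/
open Real

lemma T0_add_intCast (x : ℝ) (m : ℤ) : T0 (x + m) = T0 x := by
  simp only [T0, round_add_intCast, Int.cast_add, add_sub_add_right_eq_sub]

lemma T0_neg_le (x : ℝ) : T0 (-x) ≤ T0 x := by
  have := round_le (-x) (-round x)
  rwa [Int.cast_neg, sub_neg_eq_add, neg_add_eq_sub, abs_sub_comm (round x : ℝ)] at this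

lemma T0_neg (x : ℝ) : T0 (-x) = T0 x :=
  (T0_neg_le x).antisymm (by simpa using T0_neg_le (-x))

lemma T0_four_mul_of_five_mul_eq_intCast {y : ℝ} {m : ℤ} (h : 5 * y = m) :
    T0 (4 * y) = T0 y := by
  rw [show 4 * y = -y + m by linarith, T0_add_intCast, T0_neg]

lemma T0_four_pow_mul_of_five_mul_eq_intCast {x : ℝ} {m : ℤ} (h : 5 * x = m) (k : ℕ) :
    T0 (4 ^ k * x) = T0 x := by
  induction k with
  | zero => simp
  | succ k ih =>
    rw [pow_succ', mul_assoc, T0_four_mul_of_five_mul_eq_intCast (m := 4 ^ k * m), ih]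
    rw [mul_left_comm, h]
    push_cast
    ring

lemma hasSum_rpow_div_pow {a c p : ℝ} (ha : 1 < a) (hc : 0 ≤ c) (hp : 0 < p) :
    HasSum (fun k : ℕ => (c / a ^ k) ^ p) (c ^ p / (1 - (a ^ p)⁻¹)) := by
  have ha₀ : 0 ≤ a := by linarith
  have hr : (a ^ p)⁻¹ < 1 := inv_lt_one_of_one_lt₀ (one_lt_rpow ha hp)
  have hterm (k : ℕ) : (c / a ^ k) ^ p = c ^ p * ((a ^ p)⁻¹) ^ k := by
    rw [div_rpow hc (pow_nonneg ha₀ k), ← rpow_natCast, ← rpow_mul ha₀, mul_comm, rpow_mul ha₀,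
      rpow_natCast, inv_pow, div_eq_mul_inv]
  rw [funext hterm, div_eq_mul_inv]
  exact (hasSum_geometric_of_lt_one (by positivity) hr).mul_left (c ^ p)

theorem S_eq_of_five_mul_eq_intCast {p x : ℝ} {m : ℤ} (hp : 0 < p) (h : 5 * x = m) :
    S p x = (T0 x ^ p + (T0 (2 * x) / 2) ^ p) / (1 - (4 ^ p)⁻¹) := by
  have h2 : 5 * (2 * x) = (2 * m : ℤ) := by push_cast; linarith
  have heven : HasSum (fun k : ℕ => (T0 (2 ^ (2 * k) * x) / 2 ^ (2 * k)) ^ p)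
      (T0 x ^ p / (1 - (4 ^ p)⁻¹)) := by
    convert hasSum_rpow_div_pow (a := 4) (by norm_num) (T0_nonneg x) hp using 3 with k
    rw [pow_mul, show (2 : ℝ) ^ 2 = 4 by norm_num, T0_four_pow_mul_of_five_mul_eq_intCast h]
  have hodd : HasSum (fun k : ℕ => (T0 (2 ^ (2 * k + 1) * x) / 2 ^ (2 * k + 1)) ^ p)
      ((T0 (2 * x) / 2) ^ p / (1 - (4 ^ p)⁻¹)) := by
    convert hasSum_rpow_div_pow (a := 4) (by norm_num) (div_nonneg (T0_nonneg (2 * x)) zero_le_two)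
      hp using 3 with k
    rw [pow_succ, pow_mul, show (2 : ℝ) ^ 2 = 4 by norm_num, mul_assoc,
      T0_four_pow_mul_of_five_mul_eq_intCast h2, div_div, mul_comm ((4 : ℝ) ^ k)]
  rw [S, (HasSum.even_add_odd (f := fun n => (T0 (2 ^ n * x) / 2 ^ n) ^ p) heven hodd).tsum_eq,
    add_div]

theorem stmt_16 (p : ℝ) (hp : 0 < p) :
    S p (1 / 5) = 2 * 4 ^ p / (20 ^ p - 5 ^ p) ∧
    S p (2 / 5) = (8 ^ p + 2 ^ p) / (20 ^ p - 5 ^ p) := by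
  have h1 : T0 (1 / 5) = 1 / 5 := by norm_num [T0, round_eq]
  have h2 : T0 (2 / 5) = 2 / 5 := by norm_num [T0, round_eq]
  have h4 : T0 (4 / 5) = 1 / 5 := by norm_num [T0, round_eq]
  rw [S_eq_of_five_mul_eq_intCast (m := 1) hp (by norm_num),
    S_eq_of_five_mul_eq_intCast (m := 2) hp (by norm_num)]
  rw [h1, show 2 * (1 / 5 : ℝ) = 2 / 5 by norm_num, h2, show 2 * (2 / 5 : ℝ) = 4 / 5 by norm_num, h4]
  rw [show (1 / 5 / 2 : ℝ) = (2 * 5)⁻¹ by norm_num, show (2 / 5 / 2 : ℝ) = 5⁻¹ by norm_num,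
    show (1 / 5 : ℝ) = 5⁻¹ by norm_num, show (2 / 5 : ℝ) = 2 * 5⁻¹ by norm_num,
    show (4 : ℝ) = 2 * 2 by norm_num, show (8 : ℝ) = 2 * 2 * 2 by norm_num,
    show (20 : ℝ) = 2 * 2 * 5 by norm_num]
  simp only [mul_rpow, inv_rpow, mul_nonneg, Nat.ofNat_nonneg, inv_nonneg]
  constructor
  · field_simp
    ring
  · field_simp
end

section
/- Let 0 < p < 1 and let n be a nonnegative integer. For s in (0,1] define D_n(s) = \sum_{k=0}^{n} [ (2^{n-k+2} - (-1)^{n+k} + (-1)^k \cdot 3s)^p - (2^{n-k+2} - (-1)^{n+k} - (-1)^k \cdot 3s)^p ]. Then D_n(s) > 0 for all s in (0,1] if n is even, and D_n(s) < 0 for all s in (0,1] if n is odd. -/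
/-!
With `b j = 2 ^ (j + 2) - (-1) ^ j` and `F x = (x + 3s) ^ p - (x - 3s) ^ p`, the `k`-th summand
is `(-1) ^ k * F (b (n - k))`, so reflecting `k = n - j` gives
`D s = (-1) ^ n * ∑ j, (-1) ^ j * F (b j)`.
Since `t ↦ t ^ p` is strictly concave, `F` is strictly decreasing on `[3s, ∞)`; as `b` is
strictly increasing with `b j ≥ 3`, the sequence `F (b j)` is nonnegative and strictly decreasing, so its
alternating sum is positive.
-/

open Real Finset

theorem sub_neg_one_pow_mul_eq {R : Type*} [Ring R] (f : R → R) (b c : R) (k : ℕ) :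
    f (b + (-1) ^ k * c) - f (b - (-1) ^ k * c) = (-1) ^ k * (f (b + c) - f (b - c)) := by
  rcases k.even_or_odd with hk | hk <;> simp [hk.neg_one_pow, ← sub_eq_add_neg]

theorem neg_one_pow_add_eq_neg_one_pow_sub {R : Type*} [Monoid R] [HasDistribNeg R] {n k : ℕ}
    (hk : k ≤ n) :
    (-1 : R) ^ (n + k) = (-1) ^ (n - k) := by
  rw [show n + k = n - k + 2 * k by omega, pow_add, pow_mul, neg_one_sq, one_pow, mul_one]

theorem sum_range_neg_one_pow_mul_reflect {R : Type*} [CommRing R] (u : ℕ → R) (n : ℕ) :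
    ∑ k ∈ range (n + 1), (-1) ^ k * u (n - k) =
      (-1) ^ n * ∑ j ∈ range (n + 1), (-1) ^ j * u j := by
  rw [← sum_range_reflect, mul_sum]
  refine sum_congr rfl fun j hj => ?_
  have hjn : j ≤ n := Nat.lt_succ_iff.mp (mem_range.mp hj)
  rw [Nat.add_sub_cancel, Nat.sub_sub_self hjn, ← mul_assoc,
    ← neg_one_pow_add_eq_neg_one_pow_sub hjn, pow_add]

theorem sum_range_sub_reflect_eq {R : Type*} [CommRing R] (f : R → R) (c : R) (n : ℕ) :
    ∑ k ∈ range (n + 1), (f (2 ^ (n - k + 2) - (-1) ^ (n + k) + (-1) ^ k * c) -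
        f (2 ^ (n - k + 2) - (-1) ^ (n + k) - (-1) ^ k * c)) =
      (-1) ^ n * ∑ j ∈ range (n + 1),
        (-1) ^ j * (f (2 ^ (j + 2) - (-1) ^ j + c) - f (2 ^ (j + 2) - (-1) ^ j - c)) := by
  rw [← sum_range_neg_one_pow_mul_reflect]
  refine sum_congr rfl fun k hk => ?_
  rw [neg_one_pow_add_eq_neg_one_pow_sub (Nat.lt_succ_iff.mp (mem_range.mp hk)),
    sub_neg_one_pow_mul_eq]

theorem sum_range_neg_one_pow_mul_mem_Ioc {R : Type*} [Ring R] [LinearOrder R]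
    [IsStrictOrderedRing R] {g : ℕ → R} (hg : StrictAnti g) (hg0 : ∀ j, 0 ≤ g j) (n : ℕ) :
    ∑ j ∈ range (n + 1), (-1) ^ j * g j ∈ Set.Ioc 0 (g 0) := by
  induction n generalizing g with
  | zero => simpa using (hg0 1).trans_lt (hg Nat.zero_lt_one)
  | succ n ih =>
    obtain ⟨hpos, hle⟩ := ih (g := fun j => g (j + 1)) (fun _ _ h => hg (Nat.succ_lt_succ h))
      (fun j => hg0 (j + 1))
    have hpeel : ∑ j ∈ range (n + 1 + 1), (-1 : R) ^ j * g j
        = g 0 - ∑ j ∈ range (n + 1), (-1) ^ j * g (j + 1) := by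
      simp [sum_range_succ' _ (n + 1), pow_succ, sub_eq_neg_add]
    have h01 : g 1 < g 0 := hg Nat.zero_lt_one
    simp only [zero_add] at hle
    rw [hpeel]
    exact ⟨sub_pos.2 (hle.trans_lt h01), sub_le_self _ hpos.le⟩

theorem StrictConcaveOn.add_lt_add_of_add_eq {𝕜 : Type*} [Field 𝕜] [LinearOrder 𝕜]
    [IsStrictOrderedRing 𝕜] {s : Set 𝕜} {f : 𝕜 → 𝕜} (hf : StrictConcaveOn 𝕜 s f) {a b x y : 𝕜}
    (ha : a ∈ s) (hb : b ∈ s) (hax : a < x) (hxb : x < b) (hxy : x + y = a + b) :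
    f a + f b < f x + f y := by
  -- `x` and `y` are the convex combinations of `a` and `b` with the same two weights, swapped.
  have hab : 0 < b - a := by linarith
  set l := (b - x) / (b - a) with hl_def
  set m := (x - a) / (b - a) with hm_def
  have hl : 0 < l := div_pos (by linarith) hab
  have hm : 0 < m := div_pos (by linarith) hab
  have hlm : l + m = 1 := by rw [hl_def, hm_def]; field_simp; ring
  have hx := hf.2 ha hb (by linarith) hl hm hlm
  have hy := hf.2 ha hb (by linarith) hm hl (by rw [add_comm, hlm])
  simp only [smul_eq_mul] at hx hy
  rw [show l * a + m * b = x by rw [hl_def, hm_def]; field_simp; ring] at hx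
  rw [show m * a + l * b = y by rw [hl_def, hm_def, eq_sub_of_add_eq' hxy]; field_simp; ring] at hy
  calc f a + f b = (l * f a + m * f b) + (m * f a + l * f b) := by
        linear_combination (-(f a + f b)) * hlm
    _ < f x + f y := add_lt_add hx hy

theorem strictAntiOn_rpow_add_sub_rpow_sub {p S : ℝ} (hp0 : 0 < p) (hp1 : p < 1) (hS : 0 < S) :
    StrictAntiOn (fun x => (x + S) ^ p - (x - S) ^ p) (Set.Ici S) := by
  intro y (hy : S ≤ y) x _ hyx
  have hspread := (strictConcaveOn_rpow hp0 hp1).add_lt_add_of_add_eq (x := x - S) (y := y + S)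
    (sub_nonneg.2 hy) (show 0 ≤ x + S by linarith) (by linarith) (by linarith) (by ring)
  dsimp only
  linarith

theorem rpow_add_sub_rpow_sub_nonneg {p S x : ℝ} (hp : 0 ≤ p) (hS : 0 ≤ S) (hx : S ≤ x) :
    0 ≤ (x + S) ^ p - (x - S) ^ p :=
  sub_nonneg.2 (rpow_le_rpow (by linarith) (by linarith) hp)

theorem strictMono_two_pow_sub_neg_one_pow :
    StrictMono fun j : ℕ => (2 : ℝ) ^ (j + 2) - (-1) ^ j := by
  refine strictMono_nat_of_lt_succ fun j => ?_
  have h4 : (4 : ℝ) ≤ 2 ^ (j + 2) := by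
    rw [pow_add]; norm_num; exact one_le_pow₀ (by norm_num)
  have h1 := abs_le.mp (abs_neg_one_pow (α := ℝ) j).le
  rw [show j + 1 + 2 = j + 2 + 1 by ring, pow_succ _ (j + 2), pow_succ (-1 : ℝ) j]
  linarith [h1.1, h1.2]

theorem three_le_two_pow_sub_neg_one_pow (j : ℕ) : (3 : ℝ) ≤ 2 ^ (j + 2) - (-1) ^ j := by
  calc (3 : ℝ) = 2 ^ (0 + 2) - (-1) ^ 0 := by norm_num
    _ ≤ _ := strictMono_two_pow_sub_neg_one_pow.monotone (Nat.zero_le j)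

theorem stmt_18 (p : ℝ) (hp0 : 0 < p) (hp1 : p < 1) (n : ℕ)
    (D : ℝ → ℝ)
    (hD : ∀ s : ℝ, D s = ∑ k ∈ Finset.range (n + 1),
      (((2 : ℝ) ^ (n - k + 2) - (-1 : ℝ) ^ (n + k) + (-1 : ℝ) ^ k * (3 * s)) ^ p -
        ((2 : ℝ) ^ (n - k + 2) - (-1 : ℝ) ^ (n + k) - (-1 : ℝ) ^ k * (3 * s)) ^ p)) :
    (Even n → ∀ s ∈ Set.Ioc (0 : ℝ) 1, 0 < D s) ∧
    (Odd n → ∀ s ∈ Set.Ioc (0 : ℝ) 1, D s < 0) := by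
  have hsign : ∀ s ∈ Set.Ioc (0 : ℝ) 1, ∃ T, 0 < T ∧ D s = (-1) ^ n * T := by
    rintro s ⟨hs0, hs1⟩
    have hS : 0 < 3 * s := by positivity
    have hb : ∀ j : ℕ, 3 * s ≤ 2 ^ (j + 2) - (-1) ^ j := fun j =>
      (by linarith : 3 * s ≤ 3).trans (three_le_two_pow_sub_neg_one_pow j)
    refine ⟨_, (sum_range_neg_one_pow_mul_mem_Ioc (g := fun j =>
      (2 ^ (j + 2) - (-1) ^ j + 3 * s) ^ p - (2 ^ (j + 2) - (-1) ^ j - 3 * s) ^ p) ?_ ?_ n).1,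
      (hD s).trans (sum_range_sub_reflect_eq (· ^ p) (3 * s) n)⟩
    · exact fun i j hij => strictAntiOn_rpow_add_sub_rpow_sub hp0 hp1 hS (hb i) (hb j)
        (strictMono_two_pow_sub_neg_one_pow hij)
    · exact fun j => rpow_add_sub_rpow_sub_nonneg hp0.le hS.le (hb j)
  refine ⟨fun hn s hs => ?_, fun hn s hs => ?_⟩ <;> obtain ⟨T, hT, hDs⟩ := hsign s hs <;>
    rw [hDs, hn.neg_one_pow] <;> linarith
end
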